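/- arXiv:2008.13276 — 2 statements merged into one kernel-verified Lean document; each statement's English description precedes it below -/
import Mathlib

section
/- For every PB election there exists a feasible outcome W that satisfies full justified representation: for every weakly (β,T)-cohesive group of voters S there exists a voter i ∈ S with u_i(W) ≥ β. -/
open Finset

section PBDefs

variable {V C : Type*} [Fintype V] [DecidableEq V] [Fintype C] [DecidableEq C]

/-- Total cost (as a real number) of a set of candidates. -/
def costOf (cost : C → ℚ) (T : Finset C) : ℝ := ∑ c ∈ T, (cost c : ℝ)

/-- Total (additive) utility of voter `i` for a set of candidates. -/
def util (u : V → C → ℝ) (i : V) (T : Finset C) : ℝ := ∑ c ∈ T, u i c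

/-- A set of candidates is feasible if its total cost is within the budget of 1. -/
def feasible (cost : C → ℚ) (W : Finset C) : Prop := costOf cost W ≤ 1

/-- The validity conditions of a PB election: positive costs, utilities in `[0,1]`,
and every candidate is assigned positive utility by some voter. -/
def validPB (cost : C → ℚ) (u : V → C → ℝ) : Prop :=
  (∀ c, 0 < cost c) ∧ (∀ i c, 0 ≤ u i c ∧ u i c ≤ 1) ∧ (∀ c, ∃ i, 0 < u i c)

/-- Extended justified representation, up to one project: for every (α,T)-cohesive
(nonempty) group `S` of voters, some voter `i ∈ S` gets utility at least `∑ c ∈ T, α c`,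
or some voter `i ∈ S` would exceed this utility after adding one more candidate. -/
def EJRupToOne (cost : C → ℚ) (u : V → C → ℝ) (W : Finset C) : Prop :=
  ∀ (α : C → ℝ) (S : Finset V) (T : Finset C),
    (∀ c, 0 ≤ α c ∧ α c ≤ 1) →
    S.Nonempty →
    costOf cost T * (Fintype.card V : ℝ) ≤ (S.card : ℝ) →
    (∀ i ∈ S, ∀ c ∈ T, α c ≤ u i c) →
    (∃ i ∈ S, (∑ c ∈ T, α c) ≤ util u i W) ∨
      (∃ i ∈ S, ∃ a : C, (∑ c ∈ T, α c) < util u i (insert a W))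

/-- Extended justified representation (exact version): for every (α,T)-cohesive
(nonempty) group `S` of voters, some voter `i ∈ S` gets utility at least `∑ c ∈ T, α c`. -/
def EJRexact (cost : C → ℚ) (u : V → C → ℝ) (W : Finset C) : Prop :=
  ∀ (α : C → ℝ) (S : Finset V) (T : Finset C),
    (∀ c, 0 ≤ α c ∧ α c ≤ 1) →
    S.Nonempty →
    costOf cost T * (Fintype.card V : ℝ) ≤ (S.card : ℝ) →
    (∀ i ∈ S, ∀ c ∈ T, α c ≤ u i c) →
    ∃ i ∈ S, (∑ c ∈ T, α c) ≤ util u i W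

/-- A (nonempty) group `S` of voters is weakly (β,T)-cohesive. -/
def weaklyCohesive (cost : C → ℚ) (u : V → C → ℝ) (β : ℝ) (S : Finset V) (T : Finset C) :
    Prop :=
  S.Nonempty ∧ costOf cost T * (Fintype.card V : ℝ) ≤ (S.card : ℝ) ∧
    ∀ i ∈ S, β ≤ util u i T

/-- Full justified representation. -/
def FJR (cost : C → ℚ) (u : V → C → ℝ) (W : Finset C) : Prop :=
  ∀ (β : ℝ) (S : Finset V) (T : Finset C),
    weaklyCohesive cost u β S T → ∃ i ∈ S, β ≤ util u i W

/-- An outcome is exhaustive if no further candidate fits within the budget. -/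
def exhaustive (cost : C → ℚ) (W : Finset C) : Prop :=
  ∀ c ∉ W, 1 < costOf cost (insert c W)

/-- The core: no nonempty group `S` of voters together with a set `T` of candidates
affordable with `S`'s share of the budget can block the outcome. -/
def inCore (cost : C → ℚ) (u : V → C → ℝ) (W : Finset C) : Prop :=
  ∀ (S : Finset V) (T : Finset C), S.Nonempty →
    costOf cost T * (Fintype.card V : ℝ) ≤ (S.card : ℝ) →
    ∃ i ∈ S, util u i T ≤ util u i W

/-- The multiplicative `a`-approximate core. -/
def inAlphaCore (cost : C → ℚ) (u : V → C → ℝ) (a : ℝ) (W : Finset C) : Prop :=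
  ∀ (S : Finset V) (T : Finset C), T.Nonempty →
    costOf cost T ≤ (S.card : ℝ) / (Fintype.card V : ℝ) →
    ∃ i ∈ S, ∃ c ∈ T, util u i T / a ≤ util u i (insert c W)

/-- The total amount paid so far by voter `i`, given per-candidate payments. -/
def totalPaid (pay : V → C → ℝ) (i : V) : ℝ := ∑ c, pay i c

/-- A candidate `c` is ρ-affordable given the payments made so far. -/
def affordable (cost : C → ℚ) (u : V → C → ℝ) (pay : V → C → ℝ) (ρ : ℝ) (c : C) : Prop :=
  ∑ i, min (1 / (Fintype.card V : ℝ) - totalPaid pay i) (u i c * ρ) = (cost c : ℝ)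

/-- One step of Rule X: add a candidate that is ρ-affordable for the minimum ρ ≥ 0,
and record the corresponding payments. -/
def RuleXStep (cost : C → ℚ) (u : V → C → ℝ) :
    (Finset C × (V → C → ℝ)) → (Finset C × (V → C → ℝ)) → Prop := fun s t =>
  ∃ c ∉ s.1, ∃ ρ : ℝ, 0 ≤ ρ ∧ affordable cost u s.2 ρ c ∧
    (∀ ρ' : ℝ, 0 ≤ ρ' → ∀ c' ∉ s.1, affordable cost u s.2 ρ' c' → ρ ≤ ρ') ∧
    t = (insert c s.1,
      fun i c' => if c' = c then
        min (1 / (Fintype.card V : ℝ) - totalPaid s.2 i) (u i c * ρ) else s.2 i c')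

/-- Rule X terminates when no remaining candidate is ρ-affordable for any ρ ≥ 0. -/
def RuleXTerminal (cost : C → ℚ) (u : V → C → ℝ) (s : Finset C × (V → C → ℝ)) : Prop :=
  ∀ ρ : ℝ, 0 ≤ ρ → ∀ c ∉ s.1, ¬ affordable cost u s.2 ρ c

/-- `W` is the output of some execution of Rule X. -/
def RuleXOutcome (cost : C → ℚ) (u : V → C → ℝ) (W : Finset C) : Prop :=
  ∃ pay : V → C → ℝ,
    Relation.ReflTransGen (RuleXStep cost u) (∅, fun _ _ => 0) (W, pay) ∧
      RuleXTerminal cost u (W, pay)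

/-- One step of the Greedy Cohesive Rule: a state consists of the current outcome,
the active voters and the active candidates.  The rule picks a weakly (β,T)-cohesive
group of active voters with β maximal, breaking ties in favor of smaller `cost T`. -/
def GCRStep (cost : C → ℚ) (u : V → C → ℝ) :
    (Finset C × Finset V × Finset C) → (Finset C × Finset V × Finset C) → Prop := fun s t =>
  ∃ (β : ℝ) (S : Finset V) (T : Finset C),
    0 < β ∧ S ⊆ s.2.1 ∧ T ⊆ s.2.2 ∧ weaklyCohesive cost u β S T ∧
    (∀ (β' : ℝ) (S' : Finset V) (T' : Finset C), 0 < β' → S' ⊆ s.2.1 → T' ⊆ s.2.2 →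
      weaklyCohesive cost u β' S' T' → β' ≤ β) ∧
    (∀ (S' : Finset V) (T' : Finset C), S' ⊆ s.2.1 → T' ⊆ s.2.2 →
      weaklyCohesive cost u β S' T' → costOf cost T ≤ costOf cost T') ∧
    t = (s.1 ∪ T, s.2.1 \ S, s.2.2 \ T)

/-- GCR terminates when no weakly cohesive group of active voters remains. -/
def GCRTerminal (cost : C → ℚ) (u : V → C → ℝ) (s : Finset C × Finset V × Finset C) : Prop :=
  ∀ (β : ℝ) (S : Finset V) (T : Finset C), 0 < β → S ⊆ s.2.1 → T ⊆ s.2.2 →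
    ¬ weaklyCohesive cost u β S T

/-- `W` is the output of some execution of the Greedy Cohesive Rule. -/
def GCROutcome (cost : C → ℚ) (u : V → C → ℝ) (W : Finset C) : Prop :=
  ∃ (AV : Finset V) (AC : Finset C),
    Relation.ReflTransGen (GCRStep cost u) (∅, Finset.univ, Finset.univ) (W, AV, AC) ∧
      GCRTerminal cost u (W, AV, AC)

/-- A price system `(b, p)` (with nonnegative payments) supports the outcome `W`:
conditions (C1)-(C5). -/
def supports (cost : C → ℚ) (u : V → C → ℝ) (b : ℝ) (p : V → C → ℝ) (W : Finset C) : Prop :=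
  1 ≤ b ∧ (∀ i c, 0 ≤ p i c) ∧
  (∀ i c, u i c = 0 → p i c = 0) ∧
  (∀ i, ∑ c, p i c ≤ b / (Fintype.card V : ℝ)) ∧
  (∀ c ∈ W, ∑ i, p i c = (cost c : ℝ)) ∧
  (∀ c ∉ W, ∑ i, p i c = 0) ∧
  (∀ c ∉ W, ∑ i ∈ Finset.univ.filter (fun i => 0 < u i c),
    (b / (Fintype.card V : ℝ) - ∑ c' ∈ W, p i c') ≤ (cost c : ℝ))

/-- An outcome is priceable if some price system supports it. -/
def priceable (cost : C → ℚ) (u : V → C → ℝ) (W : Finset C) : Prop :=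
  ∃ (b : ℝ) (p : V → C → ℝ), supports cost u b p W

/-- EJR for approval-based elections: every `T`-cohesive group contains a voter
with at least `|T|` approved candidates in `W`. -/
def approvalEJR (cost : C → ℚ) (A : V → Finset C) (W : Finset C) : Prop :=
  ∀ (S : Finset V) (T : Finset C), S.Nonempty →
    costOf cost T * (Fintype.card V : ℝ) ≤ (S.card : ℝ) →
    (∀ i ∈ S, T ⊆ A i) →
    ∃ i ∈ S, T.card ≤ (A i ∩ W).card

/-- The `t`-th harmonic number. -/
noncomputable def harm (t : ℕ) : ℝ := ∑ j ∈ Finset.range t, (1 : ℝ) / (j + 1)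

/-- The PAV score of an outcome. -/
noncomputable def PAVscore (A : V → Finset C) (W : Finset C) : ℝ := ∑ i, harm ((A i ∩ W).card)

end PBDefs

/-! Greedy cohesive rule: while some voters are active, pick a weakly (β₀,T₀)-cohesive group `S₀`
of active voters with `β₀` as large as possible, add `T₀` to the outcome and deactivate `S₀`.
The picked groups are disjoint and each pays for its `T₀` out of its own share of the budget, so
the outcome is feasible. A weakly (β,T)-cohesive group `S` was still entirely active when the
first picked group `S₀` meeting it was chosen, so `β ≤ β₀`, and its voters in `S₀` get at least
`β₀` from `T₀`. -/

section FJR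

variable {V C : Type*} {cost : C → ℚ} {u : V → C → ℝ}

theorem costOf_union_le [DecidableEq C] (hcost : ∀ c, 0 ≤ cost c) (T W : Finset C) :
    costOf cost (T ∪ W) ≤ costOf cost T + costOf cost W := by
  have hinter : 0 ≤ costOf cost (T ∩ W) :=
    sum_nonneg fun c _ => by exact_mod_cast hcost c
  have := sum_union_inter (s₁ := T) (s₂ := W) (f := fun c => (cost c : ℝ))
  unfold costOf at *
  linarith

theorem util_mono (hu : ∀ i c, 0 ≤ u i c) (i : V) {T W : Finset C} (h : T ⊆ W) :
    util u i T ≤ util u i W :=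
  sum_le_sum_of_subset_of_nonneg h fun c _ _ => hu i c

def FJROn [Fintype V] (cost : C → ℚ) (u : V → C → ℝ) (A : Finset V) (W : Finset C) : Prop :=
  ∀ (β : ℝ) (S : Finset V) (T : Finset C),
    S ⊆ A → weaklyCohesive cost u β S T → ∃ i ∈ S, β ≤ util u i W

theorem FJROn.mono [Fintype V] {A B : Finset V} {W W' : Finset C} (hu : ∀ i c, 0 ≤ u i c)
    (h : FJROn cost u A W) (hBA : B ⊆ A) (hWW' : W ⊆ W') : FJROn cost u B W' := by
  intro β S T hSB hST
  obtain ⟨i, hiS, hi⟩ := h β S T (hSB.trans hBA) hST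
  exact ⟨i, hiS, hi.trans (util_mono hu i hWW')⟩

/-- Junk value `0` for empty `S`. -/
noncomputable def minUtil (u : V → C → ℝ) (S : Finset V) (T : Finset C) : ℝ :=
  if h : S.Nonempty then S.inf' h (util u · T) else 0

theorem minUtil_le {S : Finset V} {i : V} (hi : i ∈ S) (T : Finset C) :
    minUtil u S T ≤ util u i T := by
  rw [minUtil, dif_pos ⟨i, hi⟩]
  exact inf'_le _ hi

theorem le_minUtil {β : ℝ} {S : Finset V} {T : Finset C} (hS : S.Nonempty)
    (h : ∀ i ∈ S, β ≤ util u i T) : β ≤ minUtil u S T := by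
  rw [minUtil, dif_pos hS]
  exact le_inf' hS _ h

theorem exists_weaklyCohesive_isMax [Fintype V] [Fintype C] {A : Finset V} (hA : A.Nonempty) :
    ∃ (β₀ : ℝ) (S₀ : Finset V) (T₀ : Finset C), S₀ ⊆ A ∧ weaklyCohesive cost u β₀ S₀ T₀ ∧
      ∀ (β : ℝ) (S : Finset V) (T : Finset C), S ⊆ A → weaklyCohesive cost u β S T → β ≤ β₀ := by
  let P := (A.powerset ×ˢ (univ : Finset C).powerset).filter fun p =>
    p.1.Nonempty ∧ costOf cost p.2 * (Fintype.card V : ℝ) ≤ (p.1.card : ℝ)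
  have mem_P {S : Finset V} {T : Finset C} (hSA : S ⊆ A) (hS : S.Nonempty)
      (hT : costOf cost T * (Fintype.card V : ℝ) ≤ (S.card : ℝ)) : (S, T) ∈ P := by
    simp only [P, mem_filter, mem_product, mem_powerset]
    exact ⟨⟨hSA, subset_univ T⟩, hS, hT⟩
  have hP : P.Nonempty := ⟨(A, ∅), mem_P subset_rfl hA (by simp [costOf])⟩
  obtain ⟨⟨S₀, T₀⟩, h₀, hmax⟩ := P.exists_max_image (fun p => minUtil u p.1 p.2) hP
  simp only [P, mem_filter, mem_product, mem_powerset] at h₀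
  obtain ⟨⟨hS₀A, -⟩, hS₀, hT₀⟩ := h₀
  refine ⟨minUtil u S₀ T₀, S₀, T₀, hS₀A, ⟨hS₀, hT₀, fun i hi => minUtil_le hi T₀⟩, ?_⟩
  intro β S T hSA ⟨hS, hT, hβ⟩
  exact (le_minUtil hS hβ).trans (hmax (S, T) (mem_P hSA hS hT))

theorem FJROn_union_of_isMax [Fintype V] [DecidableEq V] [DecidableEq C]
    (hu : ∀ i c, 0 ≤ u i c) {A S₀ : Finset V} {W T₀ : Finset C} {β₀ : ℝ}
    (h₀ : weaklyCohesive cost u β₀ S₀ T₀)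
    (hmax : ∀ (β : ℝ) (S : Finset V) (T : Finset C), S ⊆ A → weaklyCohesive cost u β S T → β ≤ β₀)
    (hW : FJROn cost u (A \ S₀) W) : FJROn cost u A (W ∪ T₀) := by
  intro β S T hSA hST
  by_cases hmeet : (S ∩ S₀).Nonempty
  · obtain ⟨i, hi⟩ := hmeet
    obtain ⟨hiS, hiS₀⟩ := mem_inter.1 hi
    refine ⟨i, hiS, ?_⟩
    calc β ≤ β₀ := hmax β S T hSA hST
      _ ≤ util u i T₀ := h₀.2.2 i hiS₀
      _ ≤ util u i (W ∪ T₀) := util_mono hu i subset_union_right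
  · have hS : S ⊆ A \ S₀ := fun i hi =>
      mem_sdiff.2 ⟨hSA hi, fun hi₀ => hmeet ⟨i, mem_inter.2 ⟨hi, hi₀⟩⟩⟩
    exact (hW.mono hu subset_rfl subset_union_left) β S T hS hST

theorem exists_costOf_le_and_FJROn [Fintype V] [DecidableEq V] [Fintype C] [DecidableEq C]
    (hcost : ∀ c, 0 ≤ cost c) (hu : ∀ i c, 0 ≤ u i c) (A : Finset V) :
    ∃ W : Finset C, costOf cost W ≤ A.card / Fintype.card V ∧ FJROn cost u A W := by
  induction A using strongInduction with
  | _ A ih =>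
  rcases A.eq_empty_or_nonempty with rfl | hA
  · refine ⟨∅, by simp [costOf], fun β S T hS hST => ?_⟩
    obtain ⟨i, hi⟩ := hST.1
    exact absurd (hS hi) (notMem_empty i)
  obtain ⟨β₀, S₀, T₀, hS₀A, h₀, hmax⟩ := exists_weaklyCohesive_isMax (cost := cost) (u := u) hA
  obtain ⟨W, hWcost, hW⟩ := ih (A \ S₀) (sdiff_ssubset hS₀A h₀.1)
  refine ⟨W ∪ T₀, ?_, FJROn_union_of_isMax hu h₀ hmax hW⟩
  have hn : (0 : ℝ) < Fintype.card V := by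
    exact_mod_cast Fintype.card_pos_iff.2 ⟨hA.choose⟩
  have hT₀ : costOf cost T₀ ≤ S₀.card / Fintype.card V := (le_div_iff₀ hn).2 h₀.2.1
  have hcard : ((A \ S₀).card : ℝ) + S₀.card = A.card := by
    exact_mod_cast card_sdiff_add_card_eq_card hS₀A
  calc costOf cost (W ∪ T₀) ≤ costOf cost W + costOf cost T₀ := costOf_union_le hcost W T₀
    _ ≤ (A \ S₀).card / Fintype.card V + S₀.card / Fintype.card V := add_le_add hWcost hT₀
    _ = A.card / Fintype.card V := by rw [← add_div, hcard]

end FJR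

/-- For every PB election there exists a feasible outcome that satisfies
full justified representation. -/
theorem exists_feasible_FJR
    {V C : Type*} [Fintype V] [DecidableEq V] [Fintype C] [DecidableEq C]
    (cost : C → ℚ) (u : V → C → ℝ) (hvalid : validPB cost u) :
    ∃ W : Finset C, feasible cost W ∧ FJR cost u W := by
  obtain ⟨W, hcost, hW⟩ := exists_costOf_le_and_FJROn (fun c => (hvalid.1 c).le)
    (fun i c => (hvalid.2.1 i c).1) (univ : Finset V)
  refine ⟨W, hcost.trans ?_, fun β S T hST => hW β S T (subset_univ S) hST⟩
  rw [card_univ]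
  exact div_self_le_one _
end

section
/- If a PB election satisfies u_i(c) > 0 for every voter i ∈ N and every candidate c ∈ C, then every outcome produced by an execution of Rule X is exhaustive. -/
open Finset

/-!
While Rule X runs, every voter has paid at most `1/n` and the payments add up to the cost of
the current outcome, so the unspent budgets `r i = 1/n - p i` are nonnegative and sum to
`1 - cost W`. If some `c ∉ W` still fits, `cost c ≤ ∑ i, r i`; the total offer
`ρ ↦ ∑ i, min (r i) (u i c * ρ)` is continuous, vanishes at `ρ = 0` and, since every
`u i c` is positive, reaches `∑ i, r i` for large `ρ`. By the intermediate value theorem `c` is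
`ρ`-affordable for some `ρ ≥ 0`, so Rule X cannot have stopped.
-/

theorem exists_sum_min_mul_eq {ι : Type*} [Fintype ι] {r a : ι → ℝ} (hr : ∀ i, 0 ≤ r i)
    (ha : ∀ i, 0 < a i) {x : ℝ} (hx₀ : 0 ≤ x) (hx : x ≤ ∑ i, r i) :
    ∃ ρ, 0 ≤ ρ ∧ ∑ i, min (r i) (a i * ρ) = x := by
  set f : ℝ → ℝ := fun ρ => ∑ i, min (r i) (a i * ρ)
  set ρ₀ := ∑ i, r i / a i
  have hρ₀ : 0 ≤ ρ₀ := sum_nonneg fun i _ => div_nonneg (hr i) (ha i).le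
  have hf₀ : f 0 = 0 := sum_eq_zero fun i _ => by simp [hr i]
  have hfρ₀ : f ρ₀ = ∑ i, r i := by
    refine sum_congr rfl fun i _ => min_eq_left ?_
    have : r i / a i ≤ ρ₀ :=
      single_le_sum (f := fun i => r i / a i) (fun j _ => div_nonneg (hr j) (ha j).le) (mem_univ i)
    rwa [div_le_iff₀ (ha i), mul_comm] at this
  have hcont : Continuous f := by fun_prop
  obtain ⟨ρ, hρ, hfρ⟩ := intermediate_value_Icc hρ₀ hcont.continuousOn
    (show x ∈ Set.Icc (f 0) (f ρ₀) by rw [hf₀, hfρ₀]; exact ⟨hx₀, hx⟩)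
  exact ⟨ρ, hρ.1, hfρ⟩

theorem costOf_insert {C : Type*} [DecidableEq C] (cost : C → ℚ) {c : C} {W : Finset C}
    (hc : c ∉ W) :
    costOf cost (insert c W) = cost c + costOf cost W :=
  sum_insert hc

theorem totalPaid_ite_of_eq_zero {V C : Type*} [Fintype C] [DecidableEq C] {pay : V → C → ℝ}
    {q : V → ℝ} {c : C} {i : V} (hc : pay i c = 0) :
    totalPaid (fun i c' => if c' = c then q i else pay i c') i = q i + totalPaid pay i := by
  have h : ∀ c', (if c' = c then q i else pay i c') = pay i c' + if c' = c then q i else 0 := by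
    intro c'
    split_ifs with h
    · simp [h, hc]
    · simp
  simp [totalPaid, h, sum_add_distrib, add_comm]

section RuleX

variable {V C : Type*} [Fintype V] [Fintype C]

structure RuleXInvariant (cost : C → ℚ) (s : Finset C × (V → C → ℝ)) : Prop where
  pay_eq_zero_of_not_mem : ∀ i, ∀ c ∉ s.1, s.2 i c = 0
  totalPaid_le : ∀ i, totalPaid s.2 i ≤ 1 / (Fintype.card V : ℝ)
  sum_totalPaid : ∑ i, totalPaid s.2 i = costOf cost s.1

namespace RuleXInvariant

variable {cost : C → ℚ}

theorem initial : RuleXInvariant (V := V) cost (∅, fun _ _ => 0) where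
  pay_eq_zero_of_not_mem _ _ _ := rfl
  totalPaid_le _ := by simp [totalPaid]
  sum_totalPaid := by simp [totalPaid, costOf]

theorem ruleXStep [DecidableEq C] {u : V → C → ℝ} {s t : Finset C × (V → C → ℝ)}
    (hs : RuleXInvariant cost s) (hst : RuleXStep cost u s t) : RuleXInvariant cost t := by
  obtain ⟨c, hc, ρ, -, haff, -, rfl⟩ := hst
  have hpaid i := totalPaid_ite_of_eq_zero (i := i)
    (q := fun i => min (1 / (Fintype.card V : ℝ) - totalPaid s.2 i) (u i c * ρ))
    (hs.pay_eq_zero_of_not_mem i c hc)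
  refine ⟨fun i c' hc' => ?_, fun i => ?_, ?_⟩
  · rw [mem_insert, not_or] at hc'
    simp only [if_neg hc'.1]
    exact hs.pay_eq_zero_of_not_mem i c' hc'.2
  · simp only [hpaid]
    linarith [min_le_left (1 / (Fintype.card V : ℝ) - totalPaid s.2 i) (u i c * ρ)]
  · simp only [hpaid, sum_add_distrib]
    rw [haff, hs.sum_totalPaid, costOf_insert cost hc]

theorem of_reflTransGen [DecidableEq C] {u : V → C → ℝ} {s : Finset C × (V → C → ℝ)}
    (h : Relation.ReflTransGen (RuleXStep cost u) (∅, fun _ _ => 0) s) :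
    RuleXInvariant cost s := by
  induction h with
  | refl => exact initial
  | tail _ hst ih => exact ih.ruleXStep hst

theorem sum_remaining [Nonempty V] {s : Finset C × (V → C → ℝ)}
    (hs : RuleXInvariant cost s) :
    ∑ i, (1 / (Fintype.card V : ℝ) - totalPaid s.2 i) = 1 - costOf cost s.1 := by
  rw [sum_sub_distrib, hs.sum_totalPaid, sum_const, card_univ, nsmul_eq_mul,
    mul_one_div_cancel (by positivity)]

end RuleXInvariant

end RuleX

theorem ruleX_exhaustive_of_positive_utilities_general
    {V C : Type*} [Fintype V] [Fintype C] [DecidableEq C]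
    (cost : C → ℚ) (u : V → C → ℝ) (hvalid : validPB cost u)
    (hpos : ∀ (i : V) (c : C), 0 < u i c)
    (W : Finset C) (hW : RuleXOutcome cost u W) :
    exhaustive cost W := by
  obtain ⟨pay, hrun, hterm⟩ := hW
  obtain ⟨hcost, -, hliked⟩ := hvalid
  intro c hc
  by_contra! hfits
  have : Nonempty V := (hliked c).nonempty
  have hs := RuleXInvariant.of_reflTransGen hrun
  have hcost_le : (cost c : ℝ) ≤ ∑ i, (1 / (Fintype.card V : ℝ) - totalPaid pay i) := by
    rw [hs.sum_remaining]
    rw [costOf_insert cost hc] at hfits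
    linarith
  obtain ⟨ρ, hρ, haff⟩ := exists_sum_min_mul_eq (fun i => sub_nonneg.mpr (hs.totalPaid_le i))
    (fun i => hpos i c) (by exact_mod_cast (hcost c).le) hcost_le
  exact hterm ρ hρ c hc haff

/-- If every voter assigns positive utility to every candidate, then
every Rule X outcome is exhaustive. -/
theorem ruleX_exhaustive_of_positive_utilities
    {V C : Type*} [Fintype V] [DecidableEq V] [Fintype C] [DecidableEq C]
    (cost : C → ℚ) (u : V → C → ℝ) (hvalid : validPB cost u)
    (hpos : ∀ (i : V) (c : C), 0 < u i c)
    (W : Finset C) (hW : RuleXOutcome cost u W) :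
    exhaustive cost W :=
  ruleX_exhaustive_of_positive_utilities_general cost u hvalid hpos W hW
end
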